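/- Let s₀ > 7/2 and s ≥ 0. Define P_s^{(8)}(f,g) = D^s∂_x(f∂_x g) − (D^s∂_x f)∂_x g − f D^s∂_x²g − (s+1)∂_x f D^s∂_x g. Then there exists C > 0 such that ‖P_s^{(8)}(u,v)‖_{L²} ≤ C(‖u‖_{H^{s₀}}‖v‖_{H^s} + ‖u‖_{H^s}‖v‖_{H^{s₀}}) for all u, v ∈ H^{max(s,s₀)}(𝕋). -/

import Mathlib

open MeasureTheory Real Complex AddCircle
open scoped BigOperators ENNReal

noncomputable section

instance : Fact (0 < 2 * Real.pi) := ⟨by positivity⟩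

/-- The torus `ℝ/2πℤ`. -/
abbrev Torus := AddCircle (2 * Real.pi)

/-- Fourier coefficient of a real-valued function on the torus
(with respect to the normalized Haar measure). -/
def FC (f : Torus → ℝ) (n : ℤ) : ℂ :=
  fourierCoeff (fun x => (f x : ℂ)) n

/-- Inhomogeneous Sobolev `H^s` norm, via Fourier coefficients:
`‖f‖_{H^s} = ( ∑ ⟨n⟩^{2s} |f̂(n)|² )^{1/2}`. -/
def HsNorm (s : ℝ) (f : Torus → ℝ) : ℝ :=
  Real.sqrt (∑' n : ℤ, ((1 + (n : ℝ) ^ 2) ^ s) * ‖FC f n‖ ^ 2)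

/-- Homogeneous Sobolev norm `‖D^s f‖_{L²} = ( ∑ |n|^{2s} |f̂(n)|² )^{1/2}`,
where `D = 𝓕⁻¹ |ξ| 𝓕`. -/
def DsNorm (s : ℝ) (f : Torus → ℝ) : ℝ :=
  Real.sqrt (∑' n : ℤ, (|(n : ℝ)| ^ (2 * s)) * ‖FC f n‖ ^ 2)

/-- Membership in `H^s(𝕋)` (finiteness of the Sobolev sum). -/
def MemHs (s : ℝ) (f : Torus → ℝ) : Prop :=
  Summable (fun n : ℤ => ((1 + (n : ℝ) ^ 2) ^ s) * ‖FC f n‖ ^ 2)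

/-- `g` is the image of `f` under the Fourier multiplier with symbol `m`. -/
def HasSymbol (m : ℤ → ℂ) (f g : Torus → ℝ) : Prop :=
  ∀ n : ℤ, FC g n = m n * FC f n

/-- Symbol of the Hilbert transform `H`: `-i sgn(n)`. -/
def symH (n : ℤ) : ℂ := -Complex.I * (Int.sign n : ℂ)

/-- Symbol of `D^s = 𝓕⁻¹|ξ|^s𝓕`. -/
def symD (s : ℝ) (n : ℤ) : ℂ := ((|(n : ℝ)| ^ s : ℝ) : ℂ)

/-- Symbol of `∂ₓ`. -/
def symDx (n : ℤ) : ℂ := Complex.I * (n : ℂ)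

/-- Symbol of the smoothed antiderivative `J`: `ψ(ξ)/|ξ|`. -/
def symJ (ψ : ℝ → ℝ) (n : ℤ) : ℂ := ((ψ n / |(n : ℝ)| : ℝ) : ℂ)

/-- `ψ` is a smooth cutoff: `0 ≤ ψ ≤ 1`, `ψ = 1` on `|ξ| ≥ 2`, `ψ = 0` on `|ξ| ≤ 1`. -/
def IsCutoff (ψ : ℝ → ℝ) : Prop :=
  ContDiff ℝ (⊤ : ℕ∞) ψ ∧ (∀ x, 0 ≤ ψ x) ∧ (∀ x, ψ x ≤ 1) ∧
    (∀ x, 2 ≤ |x| → ψ x = 1) ∧ (∀ x, |x| ≤ 1 → ψ x = 0)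

/-- Rapid decay of Fourier coefficients (a model for "sufficiently smooth"). -/
def SmoothFC (f : Torus → ℝ) : Prop :=
  ∀ k : ℕ, Summable (fun n : ℤ => |(n : ℝ)| ^ k * ‖FC f n‖)

/-- `L²` pairing `⟨f, g⟩ = ∫ f g`. -/
def inn (f g : Torus → ℝ) : ℝ := ∫ x : Torus, f x * g x ∂haarAddCircle

/-- Trilinear integral `∫ f g h`. -/
def inn3 (f g h : Torus → ℝ) : ℝ := ∫ x : Torus, f x * g x * h x ∂haarAddCircle

/-- Quadrilinear integral `∫ f g h k`. -/
def inn4 (f g h k : Torus → ℝ) : ℝ :=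
  ∫ x : Torus, f x * g x * h x * k x ∂haarAddCircle




set_option maxHeartbeats 1000000
open scoped NNReal

section RpowTools
variable {p s a b : ℝ}

lemma P1 (hp : 1 ≤ p) (hb : 0 ≤ b) (hab : b ≤ a) :
    a ^ p - b ^ p ≤ p * a ^ (p - 1) * (a - b) := by
  have ha : 0 ≤ a := hb.trans hab
  rcases eq_or_lt_of_le ha with h0 | h0
  · have hb0 : b = 0 := le_antisymm (hab.trans h0.ge) hb
    subst hb0
    rw [← h0]
    simp
  · have hu : -1 ≤ b / a - 1 := by
      have : 0 ≤ b / a := div_nonneg hb h0.le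
      linarith
    have hber := one_add_mul_self_le_rpow_one_add hu hp
    have h1 : 1 + (b / a - 1) = b / a := by ring
    rw [h1] at hber
    have h2 : (b / a) ^ p = b ^ p / a ^ p := Real.div_rpow hb h0.le p
    rw [h2] at hber
    have hap : (0:ℝ) < a ^ p := Real.rpow_pos_of_pos h0 p
    have h3 : a ^ p * (1 + p * (b / a - 1)) ≤ b ^ p := by
      calc a ^ p * (1 + p * (b / a - 1)) ≤ a ^ p * (b ^ p / a ^ p) := by
            exact mul_le_mul_of_nonneg_left hber hap.le
        _ = b ^ p := by field_simp
    have h5 : a ^ p = a ^ (p - 1) * a := by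
      rw [Real.rpow_sub h0]
      field_simp [Real.rpow_one]
      simp
    have h4 : a ^ p * (b / a) = a ^ (p - 1) * b := by
      rw [h5]; field_simp
    nlinarith [hap.le]

lemma P2 (hp : 1 ≤ p) (hb : 0 ≤ b) (hab : b ≤ a) :
    p * b ^ (p - 1) * (a - b) ≤ a ^ p - b ^ p := by
  have ha : 0 ≤ a := hb.trans hab
  rcases eq_or_lt_of_le hb with h0 | h0
  · rw [← h0]
    rw [Real.zero_rpow (by linarith : p ≠ 0)]
    rcases eq_or_lt_of_le hp with hp1 | hp1
    · rw [← hp1]; simp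
    · rw [Real.zero_rpow (by linarith : p - 1 ≠ 0)]
      have := Real.rpow_nonneg ha p
      nlinarith
  · have hu : -1 ≤ a / b - 1 := by
      have : 0 ≤ a / b := div_nonneg ha h0.le
      linarith
    have hber := one_add_mul_self_le_rpow_one_add hu hp
    have h1 : 1 + (a / b - 1) = a / b := by ring
    rw [h1] at hber
    have h2 : (a / b) ^ p = a ^ p / b ^ p := Real.div_rpow ha h0.le p
    rw [h2] at hber
    have hbp : (0:ℝ) < b ^ p := Real.rpow_pos_of_pos h0 p
    have h3 : b ^ p * (1 + p * (a / b - 1)) ≤ a ^ p := by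
      calc b ^ p * (1 + p * (a / b - 1)) ≤ b ^ p * (a ^ p / b ^ p) := by
            exact mul_le_mul_of_nonneg_left hber hbp.le
        _ = a ^ p := by field_simp
    have h5 : b ^ p = b ^ (p - 1) * b := by
      rw [Real.rpow_sub h0]
      field_simp [Real.rpow_one]
      simp
    have h4 : b ^ p * (a / b) = b ^ (p - 1) * a := by
      rw [h5]; field_simp
    nlinarith [hbp.le]

lemma P3 (hs : 0 ≤ s) (hs1 : s ≤ 1) (hb : 0 ≤ b) (hab : b ≤ a) :
    a ^ s - b ^ s ≤ (a - b) ^ s := by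
  have ha : 0 ≤ a := hb.trans hab
  have hsub : (0:ℝ) ≤ a - b := by linarith
  have key : a ^ s ≤ (a - b) ^ s + b ^ s := by
    have h := NNReal.rpow_add_le_add_rpow (Real.toNNReal (a - b)) (Real.toNNReal b) hs hs1
    set A : ℝ≥0 := Real.toNNReal (a - b) with hA
    set B : ℝ≥0 := Real.toNNReal b with hB
    have hcoe : ((A + B : ℝ≥0) : ℝ) = a := by
      push_cast [hA, hB, Real.coe_toNNReal _ hsub, Real.coe_toNNReal _ hb]; ring
    calc a ^ s = ((A + B : ℝ≥0) : ℝ) ^ s := by rw [hcoe]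
      _ = (((A + B) ^ s : ℝ≥0) : ℝ) := by rw [NNReal.coe_rpow]
      _ ≤ ((A ^ s + B ^ s : ℝ≥0) : ℝ) := by exact_mod_cast h
      _ = (a - b) ^ s + b ^ s := by
          push_cast [NNReal.coe_rpow, hA, hB, Real.coe_toNNReal _ hsub, Real.coe_toNNReal _ hb]
          ring
  linarith

-- symmetric versions
lemma P3' (hs : 0 ≤ s) (hs1 : s ≤ 1) (ha : 0 ≤ a) (hb : 0 ≤ b) :
    |a ^ s - b ^ s| ≤ |a - b| ^ s := by
  rcases le_total b a with h | h
  · rw [_root_.abs_of_nonneg (by linarith : (0:ℝ) ≤ a - b)]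
    rw [_root_.abs_le]
    constructor
    · have := Real.rpow_nonneg (by linarith : (0:ℝ) ≤ a - b) s
      have h2 : b ^ s ≤ a ^ s := Real.rpow_le_rpow hb h hs
      linarith
    · exact P3 hs hs1 hb h
  · rw [abs_of_nonpos (by linarith : a - b ≤ 0)]
    rw [_root_.abs_le]
    have h3 : -(a-b) = b - a := by ring
    rw [h3]
    constructor
    · have := P3 hs hs1 ha h
      linarith
    · have := Real.rpow_nonneg (by linarith : (0:ℝ) ≤ b - a) s
      have h2 : a ^ s ≤ b ^ s := Real.rpow_le_rpow ha h hs
      linarith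

lemma P4 {c : ℝ} (hp : 1 ≤ p) (ha : 0 ≤ a) (hb : 0 ≤ b) (hac : a ≤ c) (hbc : b ≤ c) :
    |a ^ p - b ^ p| ≤ p * c ^ (p - 1) * |a - b| := by
  have hc : 0 ≤ c := ha.trans hac
  have hmain : ∀ x y : ℝ, 0 ≤ y → y ≤ x → x ≤ c → x ^ p - y ^ p ≤ p * c ^ (p-1) * (x - y) := by
    intro x y hy hyx hxc
    calc x ^ p - y ^ p ≤ p * x ^ (p-1) * (x - y) := P1 hp hy hyx
      _ ≤ p * c ^ (p-1) * (x - y) := by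
          have h1 : x ^ (p-1) ≤ c ^ (p-1) := Real.rpow_le_rpow (hy.trans hyx) hxc (by linarith)
          have h2 : (0:ℝ) ≤ x - y := by linarith
          apply mul_le_mul_of_nonneg_right _ h2
          exact mul_le_mul_of_nonneg_left h1 (by linarith)
  rcases le_total b a with h | h
  · rw [_root_.abs_of_nonneg (by linarith : (0:ℝ) ≤ a - b), _root_.abs_le]
    constructor
    · have h1 : b ^ p ≤ a ^ p := Real.rpow_le_rpow hb h (by linarith)
      have h2 : 0 ≤ p * c ^ (p-1) * (a - b) :=
        mul_nonneg (mul_nonneg (by linarith) (Real.rpow_nonneg hc (p-1))) (by linarith)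
      linarith
    · exact hmain a b hb h hac
  · rw [abs_of_nonpos (by linarith : a - b ≤ 0), _root_.abs_le]
    have h3 : -(a-b) = b - a := by ring
    rw [h3]
    constructor
    · have := hmain b a ha h hbc
      linarith
    · have h1 : a ^ p ≤ b ^ p := Real.rpow_le_rpow ha h (by linarith)
      have h2 : 0 ≤ p * c ^ (p-1) * (b - a) :=
        mul_nonneg (mul_nonneg (by linarith) (Real.rpow_nonneg hc (p-1))) (by linarith)
      linarith

lemma wpow {t : ℝ} (hs : 0 ≤ s) : |t| ^ s ≤ (1 + t^2) ^ (s/2) := by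
  have h1 : |t| ≤ (1 + t^2) ^ ((1:ℝ)/2) := by
    rw [← Real.sqrt_eq_rpow]
    rw [← Real.sqrt_sq_eq_abs]
    exact Real.sqrt_le_sqrt (by nlinarith)
  calc |t| ^ s ≤ ((1 + t^2) ^ ((1:ℝ)/2)) ^ s := Real.rpow_le_rpow (_root_.abs_nonneg t) h1 hs
    _ = (1 + t^2) ^ (s/2) := by
        rw [← Real.rpow_mul (by positivity)]
        ring_nf

lemma rpow_succ {t : ℝ} (ht : 0 ≤ t) {s : ℝ} (hs : 0 ≤ s) : t ^ (s + 1) = t ^ s * t := by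
  rcases eq_or_lt_of_le ht with h0 | h0
  · rw [← h0]
    rw [Real.zero_rpow (by positivity : s + (1:ℝ) ≠ 0)]
    simp
  · rw [Real.rpow_add_one h0.ne' s]

end RpowTools

/-- The symbol remainder. -/
noncomputable def Phi (s x y : ℝ) : ℝ :=
  |x + y| ^ s * (x + y) - |x| ^ s * x - |y| ^ s * y - (s + 1) * x * |y| ^ s


lemma keyA (s x y : ℝ) (hs : 0 ≤ s) (h : |y| ≤ |x|) :
    |y| * |Phi s x y| ≤
      (2:ℝ) ^ s * (s + 2) ^ 2 *
        ((1 + x^2) * (1 + y^2) ^ (s/2) + (1 + x^2) ^ (s/2) * (1 + y^2)) := by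
  set wx := (1 + x^2) ^ (s/2) with hwxdef
  set wy := (1 + y^2) ^ (s/2) with hwydef
  have hwx : |x| ^ s ≤ wx := wpow hs
  have hwy : |y| ^ s ≤ wy := wpow hs
  have hwx0 : 0 ≤ wx := Real.rpow_nonneg (by positivity) _
  have hwy0 : 0 ≤ wy := Real.rpow_nonneg (by positivity) _
  have hW1 : y^2 ≤ 1 + x^2 := by nlinarith [_root_.sq_abs x, _root_.sq_abs y, _root_.abs_nonneg x, _root_.abs_nonneg y]
  have hxy2 : |x + y| ≤ 2 * |x| := by
    calc |x + y| ≤ |x| + |y| := _root_.abs_add_le x y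
      _ ≤ 2 * |x| := by linarith
  -- decomposition
  have hdec : Phi s x y = |x+y|^s * y + x * (|x+y|^s - |x|^s) - |y|^s * y - (s+1) * x * |y|^s := by
    rw [Phi]; ring
  have htri : |Phi s x y| ≤ |x+y|^s * |y| + |x| * |(|x+y|^s - |x|^s)| + |y|^s * |y|
      + (s+1) * |x| * |y|^s := by
    rw [hdec]
    have h1 : |(|x+y|^s * y + x * (|x+y|^s - |x|^s) - |y|^s * y - (s+1) * x * |y|^s)|
        ≤ |(|x+y|^s * y)| + |(x * (|x+y|^s - |x|^s))| + |(|y|^s * y)| + |((s+1) * x * |y|^s)| := by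
      calc |(|x+y|^s * y + x * (|x+y|^s - |x|^s) - |y|^s * y - (s+1) * x * |y|^s)|
          ≤ |(|x+y|^s * y + x * (|x+y|^s - |x|^s) - |y|^s * y)| + |((s+1) * x * |y|^s)| :=
            _root_.abs_sub _ _
        _ ≤ |(|x+y|^s * y + x * (|x+y|^s - |x|^s))| + |(|y|^s * y)| + |((s+1) * x * |y|^s)| := by
            have := _root_.abs_sub (|x+y|^s * y + x * (|x+y|^s - |x|^s)) (|y|^s * y)
            linarith
        _ ≤ |(|x+y|^s * y)| + |(x * (|x+y|^s - |x|^s))| + |(|y|^s * y)| + |((s+1) * x * |y|^s)| := by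
            have := _root_.abs_add_le (|x+y|^s * y) (x * (|x+y|^s - |x|^s))
            linarith
    have e1 : |(|x+y|^s * y)| = |x+y|^s * |y| := by
      rw [_root_.abs_mul, _root_.abs_of_nonneg (Real.rpow_nonneg (_root_.abs_nonneg _) s)]
    have e2 : |(x * (|x+y|^s - |x|^s))| = |x| * |(|x+y|^s - |x|^s)| := _root_.abs_mul _ _
    have e3 : |(|y|^s * y)| = |y|^s * |y| := by
      rw [_root_.abs_mul, _root_.abs_of_nonneg (Real.rpow_nonneg (_root_.abs_nonneg _) s)]
    have e4 : |((s+1) * x * |y|^s)| = (s+1) * |x| * |y|^s := by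
      rw [_root_.abs_mul, _root_.abs_mul, _root_.abs_of_nonneg (by linarith : (0:ℝ) ≤ s+1),
        _root_.abs_of_nonneg (Real.rpow_nonneg (_root_.abs_nonneg _) s)]
    rw [e1, e2, e3, e4] at h1
    exact h1
  -- bound each term (multiplied by |y|)
  have hb1 : |y| * (|x+y|^s * |y|) ≤ 2^s * (wx * (1 + y^2)) := by
    have h1 : |x+y|^s ≤ 2^s * wx := by
      calc |x+y|^s ≤ (2*|x|)^s := Real.rpow_le_rpow (_root_.abs_nonneg _) hxy2 hs
        _ = 2^s * |x|^s := Real.mul_rpow (by norm_num) (_root_.abs_nonneg _)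
        _ ≤ 2^s * wx := by
            have h2 : (0:ℝ) ≤ 2^s := Real.rpow_nonneg (by norm_num) s
            nlinarith
    have h2 : |y| * |y| = y^2 := by rw [← _root_.abs_mul, _root_.abs_of_nonneg (mul_self_nonneg y), sq]
    have h3 : y^2 ≤ 1 + y^2 := by linarith
    have h4 : (0:ℝ) ≤ 2^s := Real.rpow_nonneg (by norm_num) s
    calc |y| * (|x+y|^s * |y|) = (|y| * |y|) * |x+y|^s := by ring
      _ = y^2 * |x+y|^s := by rw [h2]
      _ ≤ (1 + y^2) * (2^s * wx) :=
          mul_le_mul (by linarith [sq_nonneg y]) h1 (Real.rpow_nonneg (_root_.abs_nonneg (x+y)) s) (by positivity)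
      _ = 2^s * (wx * (1 + y^2)) := by ring
  have hb3 : |y| * (|y|^s * |y|) ≤ (1 + x^2) * wy := by
    have h2 : |y| * |y| = y^2 := by rw [← _root_.abs_mul, _root_.abs_of_nonneg (mul_self_nonneg y), sq]
    calc |y| * (|y|^s * |y|) = (|y| * |y|) * |y|^s := by ring
      _ = y^2 * |y|^s := by rw [h2]
      _ ≤ (1 + x^2) * wy :=
          mul_le_mul (by linarith) hwy (Real.rpow_nonneg (_root_.abs_nonneg y) s) (by positivity)
  have hb4 : |y| * ((s+1) * |x| * |y|^s) ≤ (s+1) * ((1 + x^2) * wy) := by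
    have h1 : |y| * |x| ≤ 1 + x^2 := by nlinarith [_root_.abs_nonneg x, _root_.abs_nonneg y, _root_.sq_abs x]
    have h2 : (0:ℝ) ≤ |y|^s := Real.rpow_nonneg (_root_.abs_nonneg y) s
    have hstep : (|y| * |x|) * |y|^s ≤ (1 + x^2) * wy :=
      mul_le_mul h1 hwy h2 (by positivity)
    calc |y| * ((s+1) * |x| * |y|^s) = (s+1) * ((|y| * |x|) * |y|^s) := by ring
      _ ≤ (s+1) * ((1 + x^2) * wy) := mul_le_mul_of_nonneg_left hstep (by linarith)
  have hb2 : |y| * (|x| * |(|x+y|^s - |x|^s)|) ≤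
      s * 2^s * (wx * (1 + y^2)) + (1 + x^2) * wy := by
    have habsd : _root_.abs (|x+y| - |x|) ≤ |y| := by
      have := _root_.abs_abs_sub_abs_le_abs_sub (x + y) x
      simpa using this
    rcases le_total s 1 with hs1 | hs1
    · -- s ≤ 1 : D ≤ |y|^s
      have hD : |(|x+y|^s - |x|^s)| ≤ |y|^s := by
        calc |(|x+y|^s - |x|^s)| ≤ (_root_.abs (|x+y| - |x|))^s := P3' hs hs1 (_root_.abs_nonneg _) (_root_.abs_nonneg _)
          _ ≤ |y|^s := Real.rpow_le_rpow (_root_.abs_nonneg _) habsd hs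
      have h1 : |y| * |x| ≤ 1 + x^2 := by nlinarith [_root_.abs_nonneg x, _root_.abs_nonneg y, _root_.sq_abs x]
      have h2 : (0:ℝ) ≤ |y|^s := Real.rpow_nonneg (_root_.abs_nonneg y) s
      have hmain : |y| * (|x| * |(|x+y|^s - |x|^s)|) ≤ (1 + x^2) * wy := by
        calc |y| * (|x| * |(|x+y|^s - |x|^s)|) ≤ |y| * (|x| * |y|^s) := by
              gcongr
          _ = (|y| * |x|) * |y|^s := by ring
          _ ≤ (1 + x^2) * wy := mul_le_mul h1 hwy h2 (by positivity)
      have hpos : 0 ≤ s * 2^s * (wx * (1 + y^2)) := by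
        have : (0:ℝ) ≤ 2^s := Real.rpow_nonneg (by norm_num) s
        have : (0:ℝ) ≤ wx * (1 + y^2) := by positivity
        positivity
      linarith
    · -- s ≥ 1
      have hD : |(|x+y|^s - |x|^s)| ≤ s * (2*|x|)^(s-1) * |y| := by
        calc |(|x+y|^s - |x|^s)| ≤ s * (2*|x|)^(s-1) * _root_.abs (|x+y| - |x|) :=
              P4 hs1 (_root_.abs_nonneg _) (_root_.abs_nonneg _) hxy2 (by nlinarith [_root_.abs_nonneg x])
          _ ≤ s * (2*|x|)^(s-1) * |y| := by
              have h0 : (0:ℝ) ≤ s * (2*|x|)^(s-1) :=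
                mul_nonneg (by linarith) (Real.rpow_nonneg (by positivity) _)
              nlinarith
      have hx2 : (2*|x|)^(s-1) * (2*|x|) = (2*|x|)^s := by
        rw [← rpow_succ (by positivity) (by linarith : (0:ℝ) ≤ s - 1)]
        norm_num
      have h2xs : (2*|x|)^s = 2^s * |x|^s := Real.mul_rpow (by norm_num) (_root_.abs_nonneg _)
      have hmain : |y| * (|x| * |(|x+y|^s - |x|^s)|) ≤ s * 2^s * (wx * (1 + y^2)) := by
        have step1 : |y| * (|x| * |(|x+y|^s - |x|^s)|) ≤ |y| * (|x| * (s * (2*|x|)^(s-1) * |y|)) := by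
          gcongr
        have step2 : |y| * (|x| * (s * (2*|x|)^(s-1) * |y|)) = s * ((|y| * |y|) * ((2*|x|)^(s-1) * |x|)) := by
          ring
        have h2 : |y| * |y| = y^2 := by rw [← _root_.abs_mul, _root_.abs_of_nonneg (mul_self_nonneg y), sq]
        have step3 : (2*|x|)^(s-1) * |x| ≤ 2^s * |x|^s := by
          have e : (2*|x|)^(s-1) * (2 * |x|) = 2^s * |x|^s := by rw [hx2, h2xs]
          have h6 : (0:ℝ) ≤ (2*|x|)^(s-1) * |x| :=
            mul_nonneg (Real.rpow_nonneg (by positivity) _) (_root_.abs_nonneg x)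
          have e2 : 2 * ((2*|x|)^(s-1) * |x|) = 2^s * |x|^s := by linear_combination e
          linarith
        have step4 : y^2 * ((2*|x|)^(s-1) * |x|) ≤ (1 + y^2) * (2^s * wx) := by
          have h6 : (0:ℝ) ≤ (2*|x|)^(s-1) * |x| :=
            mul_nonneg (Real.rpow_nonneg (by positivity) _) (_root_.abs_nonneg x)
          have h5 : 2^s * |x|^s ≤ 2^s * wx :=
            mul_le_mul_of_nonneg_left hwx (Real.rpow_nonneg (by norm_num) s)
          exact mul_le_mul (by linarith) (step3.trans h5) h6 (by positivity)
        calc |y| * (|x| * |(|x+y|^s - |x|^s)|) ≤ s * (y^2 * ((2*|x|)^(s-1) * |x|)) := by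
              rw [step2, h2] at step1
              exact step1
          _ ≤ s * ((1 + y^2) * (2^s * wx)) := mul_le_mul_of_nonneg_left step4 hs
          _ = s * 2^s * (wx * (1 + y^2)) := by ring
      have hpos : (0:ℝ) ≤ (1 + x^2) * wy := by positivity
      linarith
  -- combine
  have hsum : |y| * |Phi s x y| ≤ (2^s + s * 2^s) * (wx * (1 + y^2)) + (s + 3) * ((1 + x^2) * wy) := by
    have hmul := mul_le_mul_of_nonneg_left htri (_root_.abs_nonneg y)
    have hexp : |y| * (|x+y|^s * |y| + |x| * |(|x+y|^s - |x|^s)| + |y|^s * |y|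
        + (s+1) * |x| * |y|^s)
        = |y| * (|x+y|^s * |y|) + |y| * (|x| * |(|x+y|^s - |x|^s)|) + |y| * (|y|^s * |y|)
          + |y| * ((s+1) * |x| * |y|^s) := by ring
    rw [hexp] at hmul
    linarith
  have h2s : (1:ℝ) ≤ 2^s := Real.one_le_rpow (by norm_num) hs
  have hA : (0:ℝ) ≤ wx * (1 + y^2) := by positivity
  have hB : (0:ℝ) ≤ (1 + x^2) * wy := by positivity
  have c1 : 2^s + s * 2^s ≤ 2^s * (s+2)^2 := by nlinarith [h2s, sq_nonneg s, hs]
  have c2 : s + 3 ≤ 2^s * (s+2)^2 := by nlinarith [h2s, sq_nonneg s, sq_nonneg (s+2), hs]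
  have d1 := mul_le_mul_of_nonneg_right c1 hA
  have d2 := mul_le_mul_of_nonneg_right c2 hB
  calc |y| * |Phi s x y| ≤ (2^s + s * 2^s) * (wx * (1 + y^2)) + (s + 3) * ((1 + x^2) * wy) := hsum
    _ ≤ 2^s * (s+2)^2 * ((1 + x^2) * (1 + y^2)^(s/2) + (1 + x^2)^(s/2) * (1 + y^2)) := by
        have expand : 2^s * (s+2)^2 * ((1 + x^2) * wy + wx * (1 + y^2))
            = 2^s * (s+2)^2 * ((1 + x^2) * wy) + 2^s * (s+2)^2 * (wx * (1 + y^2)) := by ring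
        rw [← hwxdef, ← hwydef, expand]
        linarith [d1, d2]

section Gbounds
variable {s u v w : ℝ}

lemma hexp1 (s : ℝ) : s + 1 - 1 = s := by ring

lemma GboundA (hs : 0 ≤ s) (hs1 : s ≤ 1) (hv : 0 ≤ v) (hu : 0 ≤ u) :
    (v+u)^(s+1) - v^(s+1) - (s+1)*v^s*u ≤ (s+1)*(u^s*u) := by
  have hP := P1 (by linarith : 1 ≤ s+1) hv (by linarith : v ≤ v+u)
  rw [hexp1] at hP
  have e1 : v + u - v = u := by ring
  rw [e1] at hP
  have hP3 := P3 hs hs1 hv (by linarith : v ≤ v+u)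
  rw [e1] at hP3
  have h1 : (s+1)*u*((v+u)^s - v^s) ≤ (s+1)*u*(u^s) :=
    mul_le_mul_of_nonneg_left hP3 (by nlinarith)
  nlinarith [hP, h1]

lemma GboundA' (hs1 : 1 ≤ s) (hv : 0 ≤ v) (hu : 0 ≤ u) (huv : u ≤ v) :
    (v+u)^(s+1) - v^(s+1) - (s+1)*v^s*u ≤ s*(s+1)*2^s*(u^2*v^(s-1)) := by
  have hs : (0:ℝ) ≤ s := by linarith
  have hP := P1 (by linarith : 1 ≤ s+1) hv (by linarith : v ≤ v+u)
  rw [hexp1] at hP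
  have e1 : v + u - v = u := by ring
  rw [e1] at hP
  have hQ := P1 hs1 hv (by linarith : v ≤ v+u)
  rw [e1] at hQ
  -- (v+u)^(s-1) ≤ 2^s * v^(s-1)
  have h2 : (v+u)^(s-1) ≤ 2^s * v^(s-1) := by
    calc (v+u)^(s-1) ≤ (2*v)^(s-1) :=
          Real.rpow_le_rpow (by linarith) (by linarith) (by linarith)
      _ = 2^(s-1) * v^(s-1) := Real.mul_rpow (by norm_num) hv
      _ ≤ 2^s * v^(s-1) := by
          have := Real.rpow_le_rpow_of_exponent_le (by norm_num : (1:ℝ) ≤ 2) (by linarith : s - 1 ≤ s)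
          have hv0 : (0:ℝ) ≤ v^(s-1) := Real.rpow_nonneg hv _
          nlinarith
  have h1 : (s+1)*u*((v+u)^s - v^s) ≤ (s+1)*u*(s*(v+u)^(s-1)*u) :=
    mul_le_mul_of_nonneg_left hQ (by nlinarith)
  have hc : (0:ℝ) ≤ (s+1)*s*u*u := by positivity
  have h3 := mul_le_mul_of_nonneg_left h2 hc
  nlinarith [hP, h1, h3]

lemma GboundB (hs : 0 ≤ s) (hs1 : s ≤ 1) (hw : 0 ≤ w) (hwv : w ≤ v) :
    (v-w)^(s+1) - v^(s+1) + (s+1)*v^s*w ≤ (s+1)*(w^s*w) := by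
  have hvw : (0:ℝ) ≤ v - w := by linarith
  have hP2 := P2 (by linarith : 1 ≤ s+1) hvw (by linarith : v - w ≤ v)
  rw [hexp1] at hP2
  have e1 : v - (v - w) = w := by ring
  rw [e1] at hP2
  have hP3 := P3 hs hs1 hvw (by linarith : v - w ≤ v)
  rw [e1] at hP3
  have h1 : (s+1)*w*(v^s - (v-w)^s) ≤ (s+1)*w*(w^s) :=
    mul_le_mul_of_nonneg_left hP3 (by nlinarith)
  nlinarith [hP2, h1]

lemma GboundB' (hs1 : 1 ≤ s) (hw : 0 ≤ w) (hwv : w ≤ v) :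
    (v-w)^(s+1) - v^(s+1) + (s+1)*v^s*w ≤ s*(s+1)*2^s*(w^2*v^(s-1)) := by
  have hs : (0:ℝ) ≤ s := by linarith
  have hvw : (0:ℝ) ≤ v - w := by linarith
  have hP2 := P2 (by linarith : 1 ≤ s+1) hvw (by linarith : v - w ≤ v)
  rw [hexp1] at hP2
  have e1 : v - (v - w) = w := by ring
  rw [e1] at hP2
  have hQ := P1 hs1 hvw (by linarith : v - w ≤ v)
  rw [e1] at hQ
  have h1 : (s+1)*w*(v^s - (v-w)^s) ≤ (s+1)*w*(s*v^(s-1)*w) :=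
    mul_le_mul_of_nonneg_left hQ (by nlinarith)
  have h2s : (1:ℝ) ≤ 2^s := Real.one_le_rpow (by norm_num) hs
  have hc : (0:ℝ) ≤ s*(s+1)*(w^2*v^(s-1)) := by
    have : (0:ℝ) ≤ v^(s-1) := Real.rpow_nonneg (by linarith) _
    positivity
  nlinarith [hP2, h1, mul_le_mul_of_nonneg_left h2s hc]

-- lower bound for G, x ≥ 0 version
lemma Glow_pos (hs : 0 ≤ s) (hv : 0 ≤ v) (hu : 0 ≤ u) :
    0 ≤ (v+u)^(s+1) - v^(s+1) - (s+1)*v^s*u := by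
  have hP := P2 (by linarith : 1 ≤ s+1) hv (by linarith : v ≤ v+u)
  rw [hexp1] at hP
  have e1 : v + u - v = u := by ring
  rw [e1] at hP
  linarith
-- lower bound for G, x < 0 version
lemma Glow_neg (hs : 0 ≤ s) (hw : 0 ≤ w) (hwv : w ≤ v) :
    0 ≤ (v-w)^(s+1) - v^(s+1) + (s+1)*v^s*w := by
  have hvw : (0:ℝ) ≤ v - w := by linarith
  have hP := P1 (by linarith : 1 ≤ s+1) hvw (by linarith : v - w ≤ v)
  rw [hexp1] at hP
  have e1 : v - (v - w) = w := by ring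
  rw [e1] at hP
  linarith

end Gbounds

lemma keyB (s x y : ℝ) (hs : 0 ≤ s) (hy : 0 ≤ y) (hxy : |x| ≤ y) :
    |y| * |Phi s x y| ≤
      (2:ℝ) ^ s * (s + 2) ^ 2 *
        ((1 + x^2) * (1 + y^2) ^ (s/2) + (1 + x^2) ^ (s/2) * (1 + y^2)) := by
  rcases eq_or_lt_of_le hy with h0 | h0
  · rw [← h0]
    simp only [_root_.abs_zero, zero_mul]
    positivity
  set wx := (1 + x^2) ^ (s/2) with hwxdef
  set wy := (1 + y^2) ^ (s/2) with hwydef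
  have hwx : |x| ^ s ≤ wx := wpow hs
  have hwyb : y ^ s ≤ wy := by
    have := wpow (t := y) hs
    rwa [_root_.abs_of_nonneg hy] at this
  have hwx0 : 0 ≤ wx := Real.rpow_nonneg (by positivity) _
  have hwy0 : 0 ≤ wy := Real.rpow_nonneg (by positivity) _
  have hxb := _root_.abs_le.mp hxy
  have hxy0 : 0 ≤ x + y := by linarith [hxb.1]
  set G := (x+y)^(s+1) - y^(s+1) - (s+1)*y^s*x with hGdef
  have hphiG : Phi s x y = G - |x|^s * x := by
    rw [Phi, hGdef, _root_.abs_of_nonneg hxy0, _root_.abs_of_nonneg hy,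
      rpow_succ hxy0 hs, rpow_succ hy hs]
    ring
  have h2s : (1:ℝ) ≤ 2^s := Real.one_le_rpow (by norm_num) hs
  have h2s0 : (0:ℝ) ≤ 2^s := by linarith
  have hxyy : |x| * y ≤ 1 + y^2 := by nlinarith [_root_.abs_nonneg x, sq_nonneg y]
  -- lower bound for G
  have hG0 : 0 ≤ G := by
    rcases le_or_gt 0 x with hx | hx
    · have h := Glow_pos (u := x) (v := y) hs hy hx
      have e : y + x = x + y := by ring
      rw [e] at h
      rw [hGdef]; linarith
    · have h := Glow_neg (w := -x) (v := y) hs (by linarith) (by linarith [hxb.1])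
      have e : y - -x = x + y := by ring
      rw [e] at h
      rw [hGdef]; linarith
  -- generic bounds
  have hterm1 : y * ((s+1)*(|x|^s*|x|)) ≤ (s+1) * (wx * (1+y^2)) := by
    have h1 : |x|^s * (|x| * y) ≤ wx * (1+y^2) :=
      mul_le_mul hwx hxyy (by positivity) hwx0
    calc y * ((s+1)*(|x|^s*|x|)) = (s+1) * (|x|^s * (|x| * y)) := by ring
      _ ≤ (s+1) * (wx * (1+y^2)) := mul_le_mul_of_nonneg_left h1 (by linarith)
  have hterm2 : 1 ≤ s → y * (s*(s+1)*2^s*(|x|^2*y^(s-1))) ≤ s*(s+1)*2^s * ((1+x^2) * wy) := by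
    intro hs1
    have hys : y^(s-1) * y = y^s := by
      rw [← rpow_succ hy (by linarith : (0:ℝ) ≤ s-1)]
      norm_num
    have hK : (0:ℝ) ≤ s*(s+1)*2^s := by positivity
    have hin : x^2 * y^s ≤ (1+x^2) * wy :=
      mul_le_mul (by linarith) hwyb (Real.rpow_nonneg hy s) (by positivity)
    calc y * (s*(s+1)*2^s*(|x|^2*y^(s-1))) = s*(s+1)*2^s*(|x|^2*(y^(s-1)*y)) := by ring
      _ = s*(s+1)*2^s*(x^2*y^s) := by rw [hys, _root_.sq_abs]
      _ ≤ s*(s+1)*2^s * ((1+x^2) * wy) := mul_le_mul_of_nonneg_left hin hK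
  have hApos : (0:ℝ) ≤ wx * (1+y^2) := by positivity
  have hBpos : (0:ℝ) ≤ (1+x^2) * wy := by positivity
  have hKpos : (0:ℝ) ≤ s*(s+1)*2^s := by positivity
  -- the main case analysis for y*G
  have hyG : y * G ≤ (s+1) * (wx * (1+y^2)) + s*(s+1)*2^s * ((1+x^2) * wy) := by
    rcases le_or_gt 0 x with hx | hx
    · have hxabs : |x| = x := _root_.abs_of_nonneg hx
      rcases le_total s 1 with hs1 | hs1
      · have hGA := GboundA hs hs1 hy hx
        have e : y + x = x + y := by ring
        rw [e] at hGA
        have hGle : G ≤ (s+1)*(|x|^s*|x|) := by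
          rw [hGdef, hxabs]; linarith
        have := mul_le_mul_of_nonneg_left hGle hy
        have h2 := hterm1
        nlinarith [mul_nonneg hKpos hBpos]
      · have hGA := GboundA' hs1 hy hx hxb.2
        have e : y + x = x + y := by ring
        rw [e] at hGA
        have hGle : G ≤ s*(s+1)*2^s*(|x|^2*y^(s-1)) := by
          rw [hGdef, hxabs]
          calc (x+y)^(s+1) - y^(s+1) - (s+1)*y^s*x ≤ s*(s+1)*2^s*(x^2*y^(s-1)) := hGA
            _ = s*(s+1)*2^s*(x^2*y^(s-1)) := rfl
        have := mul_le_mul_of_nonneg_left hGle hy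
        have h2 := hterm2 hs1
        have hxsq : |x|^2 = x^2 := _root_.sq_abs x
        rw [hxsq] at h2
        nlinarith [mul_nonneg (by linarith : (0:ℝ) ≤ s+1) hApos]
    · have hw : (0:ℝ) ≤ -x := by linarith
      have hwv : -x ≤ y := by linarith [hxb.1]
      have hxabs : |x| = -x := _root_.abs_of_neg hx
      rcases le_total s 1 with hs1 | hs1
      · have hGB := GboundB (w := -x) (v := y) hs hs1 hw hwv
        have e : y - -x = x + y := by ring
        rw [e] at hGB
        have hGle : G ≤ (s+1)*(|x|^s*|x|) := by
          rw [hGdef, hxabs]; linarith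
        have := mul_le_mul_of_nonneg_left hGle hy
        have h2 := hterm1
        nlinarith [mul_nonneg hKpos hBpos]
      · have hGB := GboundB' (w := -x) (v := y) hs1 hw hwv
        have e : y - -x = x + y := by ring
        rw [e] at hGB
        have hGle : G ≤ s*(s+1)*2^s*(|x|^2*y^(s-1)) := by
          rw [hGdef, hxabs]
          have e2 : (-x)^2 = x^2 := by ring
          rw [e2] at hGB
          have e3 : |(-x)| = -x := by rw [_root_.abs_neg, hxabs]
          calc (x+y)^(s+1) - y^(s+1) - (s+1)*y^s*x ≤ s*(s+1)*2^s*(x^2*y^(s-1)) := by linarith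
            _ = s*(s+1)*2^s*((-x)^2*y^(s-1)) := by ring
        have := mul_le_mul_of_nonneg_left hGle hy
        have h2 := hterm2 hs1
        have hxsq : |x|^2 = x^2 := _root_.sq_abs x
        rw [hxsq] at h2
        have e4 : |x|^2 = x^2 := _root_.sq_abs x
        have e5 : y * (s*(s+1)*2^s*(|x|^2*y^(s-1))) = y * (s*(s+1)*2^s*(x^2*y^(s-1))) := by
          rw [e4]
        rw [e5] at this
        nlinarith [mul_nonneg (by linarith : (0:ℝ) ≤ s+1) hApos]
  -- final assembly
  have habs : |Phi s x y| ≤ G + |x|^s*|x| := by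
    rw [hphiG]
    calc |G - |x|^s*x| ≤ |G| + |(|x|^s*x)| := _root_.abs_sub _ _
      _ = G + |x|^s*|x| := by
          rw [_root_.abs_of_nonneg hG0, _root_.abs_mul,
            _root_.abs_of_nonneg (Real.rpow_nonneg (_root_.abs_nonneg x) s)]
  have hlast : y * (|x|^s*|x|) ≤ wx * (1+y^2) := by
    have h1 : |x|^s * (|x| * y) ≤ wx * (1+y^2) :=
      mul_le_mul hwx hxyy (by positivity) hwx0
    calc y * (|x|^s*|x|) = |x|^s * (|x| * y) := by ring
      _ ≤ wx * (1+y^2) := h1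
  have htot : y * |Phi s x y| ≤ (s+2) * (wx * (1+y^2)) + s*(s+1)*2^s * ((1+x^2) * wy) := by
    have := mul_le_mul_of_nonneg_left habs hy
    nlinarith [hyG, hlast]
  have c1 : s + 2 ≤ 2^s*(s+2)^2 := by nlinarith [h2s, sq_nonneg s, hs]
  have c2 : s*(s+1)*2^s ≤ 2^s*(s+2)^2 := by nlinarith [h2s0, hs, sq_nonneg s]
  have d1 := mul_le_mul_of_nonneg_right c1 hApos
  have d2 := mul_le_mul_of_nonneg_right c2 hBpos
  rw [_root_.abs_of_nonneg hy]
  have expand : 2^s * (s+2)^2 * ((1 + x^2) * wy + wx * (1 + y^2))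
      = 2^s * (s+2)^2 * ((1 + x^2) * wy) + 2^s * (s+2)^2 * (wx * (1 + y^2)) := by ring
  calc y * |Phi s x y| ≤ (s+2) * (wx * (1+y^2)) + s*(s+1)*2^s * ((1+x^2) * wy) := htot
    _ ≤ 2^s * (s+2)^2 * ((1 + x^2) * (1+y^2)^(s/2) + (1+x^2)^(s/2) * (1 + y^2)) := by
        rw [← hwxdef, ← hwydef, expand]
        linarith [d1, d2]

lemma phi_neg (s x y : ℝ) : Phi s (-x) (-y) = -Phi s x y := by
  rw [Phi, Phi]
  have e : -x + -y = -(x+y) := by ring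
  rw [e, _root_.abs_neg, _root_.abs_neg, _root_.abs_neg]
  ring

lemma key (s x y : ℝ) (hs : 0 ≤ s) :
    |y| * |Phi s x y| ≤
      (2:ℝ) ^ s * (s + 2) ^ 2 *
        ((1 + x^2) * (1 + y^2) ^ (s/2) + (1 + x^2) ^ (s/2) * (1 + y^2)) := by
  rcases le_total (|y|) (|x|) with h | h
  · exact keyA s x y hs h
  · rcases le_or_gt 0 y with hy | hy
    · exact keyB s x y hs hy (by rwa [_root_.abs_of_nonneg hy] at h)
    · have h2 := keyB s (-x) (-y) hs (by linarith)
        (by rw [_root_.abs_neg]; rw [_root_.abs_of_neg hy] at h; exact h)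
      rw [phi_neg] at h2
      have e1 : |(-y)| = |y| := _root_.abs_neg y
      have e2 : |(-Phi s x y)| = |Phi s x y| := _root_.abs_neg _
      have e3 : (-x)^2 = x^2 := by ring
      have e4 : (-y)^2 = y^2 := by ring
      rw [e1, e2, e3, e4] at h2
      exact h2

lemma shift_sum (a : ℤ → ℝ≥0∞) (m : ℤ) : ∑' n : ℤ, a (n - m) = ∑' k, a k :=
  (Equiv.subRight m).tsum_eq a

lemma shift_sum' (a : ℤ → ℝ≥0∞) (n : ℤ) : ∑' m : ℤ, a (n - m) = ∑' k, a k :=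
  (Equiv.subLeft n).tsum_eq a

lemma conv_comm (F G : ℤ → ℝ≥0∞) (n : ℤ) :
    ∑' m, F (n - m) * G m = ∑' m, G (n - m) * F m := by
  have h := (Equiv.subLeft n).tsum_eq (fun m => G (n - m) * F m)
  simp only [Equiv.subLeft_apply, sub_sub_cancel] at h
  rw [← h]
  congr 1
  funext m
  rw [mul_comm]

lemma young (a b : ℤ → ℝ≥0∞) :
    ∑' n : ℤ, (∑' m : ℤ, a (n - m) * b m)^2 ≤ 2 * ((∑' k, a k)^2 * ∑' m, (b m)^2) := by
  set A := ∑' k, a k with hA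
  have sq_expand : ∀ n : ℤ, (∑' m, a (n-m) * b m)^2
      = ∑' m : ℤ, ∑' m' : ℤ, (a (n-m) * b m) * (a (n-m') * b m') := by
    intro n
    rw [sq, ← ENNReal.tsum_mul_right]
    congr 1
    funext m
    rw [← ENNReal.tsum_mul_left]
  have pointwise : ∀ n : ℤ, (∑' m, a (n-m) * b m)^2
      ≤ 2 * ∑' m : ℤ, ∑' m' : ℤ, a (n-m) * a (n-m') * (b m)^2 := by
    intro n
    rw [sq_expand n]
    have step1 : ∑' m : ℤ, ∑' m' : ℤ, (a (n-m) * b m) * (a (n-m') * b m')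
        ≤ ∑' m : ℤ, ∑' m' : ℤ, (a (n-m) * a (n-m')) * ((b m)^2 + (b m')^2) := by
      apply ENNReal.tsum_le_tsum
      intro m
      apply ENNReal.tsum_le_tsum
      intro m'
      have hb : b m * b m' ≤ (b m)^2 + (b m')^2 := by
        rcases le_total (b m) (b m') with h | h
        · calc b m * b m' ≤ b m' * b m' := mul_le_mul_left h _
            _ = (b m')^2 := (sq _).symm
            _ ≤ (b m)^2 + (b m')^2 := le_add_self
        · calc b m * b m' ≤ b m * b m := mul_le_mul_right h _
            _ = (b m)^2 := (sq _).symm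
            _ ≤ (b m)^2 + (b m')^2 := le_self_add
      calc (a (n-m) * b m) * (a (n-m') * b m')
          = (a (n-m) * a (n-m')) * (b m * b m') := by ring
        _ ≤ (a (n-m) * a (n-m')) * ((b m)^2 + (b m')^2) := mul_le_mul_right hb _
    have step2 : ∑' m : ℤ, ∑' m' : ℤ, (a (n-m) * a (n-m')) * ((b m)^2 + (b m')^2)
        = (∑' m : ℤ, ∑' m' : ℤ, a (n-m) * a (n-m') * (b m)^2)
          + ∑' m : ℤ, ∑' m' : ℤ, a (n-m) * a (n-m') * (b m')^2 := by
      rw [← ENNReal.tsum_add]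
      refine tsum_congr fun m => ?_
      rw [← ENNReal.tsum_add]
      exact tsum_congr fun m' => by ring
    have step3 : ∑' m : ℤ, ∑' m' : ℤ, a (n-m) * a (n-m') * (b m')^2
        = ∑' m : ℤ, ∑' m' : ℤ, a (n-m) * a (n-m') * (b m)^2 := by
      rw [ENNReal.tsum_comm]
      exact tsum_congr fun m => tsum_congr fun m' => by ring
    rw [step2, step3] at step1
    calc ∑' m : ℤ, ∑' m' : ℤ, (a (n-m) * b m) * (a (n-m') * b m')
        ≤ (∑' m : ℤ, ∑' m' : ℤ, a (n-m) * a (n-m') * (b m)^2)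
          + ∑' m : ℤ, ∑' m' : ℤ, a (n-m) * a (n-m') * (b m)^2 := step1
      _ = 2 * ∑' m : ℤ, ∑' m' : ℤ, a (n-m) * a (n-m') * (b m)^2 := (two_mul _).symm
  have inner_eval : ∀ n m : ℤ, ∑' m' : ℤ, a (n-m) * a (n-m') * (b m)^2
      = (a (n-m) * (b m)^2) * A := by
    intro n m
    calc ∑' m' : ℤ, a (n-m) * a (n-m') * (b m)^2
        = ∑' m' : ℤ, (a (n-m) * (b m)^2) * a (n-m') :=
          tsum_congr fun m' => by ring
      _ = (a (n-m) * (b m)^2) * ∑' m' : ℤ, a (n-m') := ENNReal.tsum_mul_left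
      _ = (a (n-m) * (b m)^2) * A := by rw [shift_sum' a n]
  calc ∑' n : ℤ, (∑' m : ℤ, a (n - m) * b m)^2
      ≤ ∑' n : ℤ, 2 * ∑' m : ℤ, ∑' m' : ℤ, a (n-m) * a (n-m') * (b m)^2 :=
        ENNReal.tsum_le_tsum pointwise
    _ = 2 * ∑' n : ℤ, ∑' m : ℤ, ∑' m' : ℤ, a (n-m) * a (n-m') * (b m)^2 :=
        ENNReal.tsum_mul_left
    _ = 2 * ∑' n : ℤ, ∑' m : ℤ, (a (n-m) * (b m)^2) * A := by
        congr 1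
        exact tsum_congr fun n => tsum_congr fun m => inner_eval n m
    _ = 2 * ∑' m : ℤ, ∑' n : ℤ, (a (n-m) * (b m)^2) * A := by rw [ENNReal.tsum_comm]
    _ = 2 * ∑' m : ℤ, ((b m)^2 * A) * ∑' n : ℤ, a (n-m) := by
        congr 1
        refine tsum_congr fun m => ?_
        rw [← ENNReal.tsum_mul_left]
        exact tsum_congr fun n => by ring
    _ = 2 * ∑' m : ℤ, ((b m)^2 * A) * A := by
        congr 1
        exact tsum_congr fun m => by rw [shift_sum a m]
    _ = 2 * (A^2 * ∑' m, (b m)^2) := by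
        congr 1
        rw [← ENNReal.tsum_mul_left]
        exact tsum_congr fun m => by ring

lemma cs_summable {w h : ℤ → ℝ} (hw : ∀ k, 0 ≤ w k) (hh : ∀ k, 0 ≤ h k)
    (sw : Summable fun k => (w k)^2) (sh : Summable fun k => (h k)^2) :
    Summable (fun k => w k * h k) := by
  apply Summable.of_nonneg_of_le (fun k => mul_nonneg (hw k) (hh k))
    (fun k => ?_) (sw.add sh)
  nlinarith [sq_nonneg (w k - h k), hw k, hh k]

lemma cs_real {w h : ℤ → ℝ} (hw : ∀ k, 0 ≤ w k) (hh : ∀ k, 0 ≤ h k)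
    (sw : Summable fun k => (w k)^2) (sh : Summable fun k => (h k)^2) :
    ∑' k, w k * h k ≤ Real.sqrt (∑' k, (w k)^2) * Real.sqrt (∑' k, (h k)^2) := by
  apply (cs_summable hw hh sw sh).tsum_le_of_sum_le
  intro s
  have h1 : (∑ i ∈ s, w i * h i)^2 ≤ (∑ i ∈ s, (w i)^2) * (∑ i ∈ s, (h i)^2) :=
    Finset.sum_mul_sq_le_sq_mul_sq s w h
  have h2 : ∑ i ∈ s, (w i)^2 ≤ ∑' k, (w k)^2 :=
    sw.sum_le_tsum s (fun k _ => sq_nonneg _)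
  have h3 : ∑ i ∈ s, (h i)^2 ≤ ∑' k, (h k)^2 :=
    sh.sum_le_tsum s (fun k _ => sq_nonneg _)
  have h4 : (0:ℝ) ≤ ∑ i ∈ s, w i * h i :=
    Finset.sum_nonneg fun i _ => mul_nonneg (hw i) (hh i)
  have h5 : ∑ i ∈ s, w i * h i = Real.sqrt ((∑ i ∈ s, w i * h i)^2) :=
    (Real.sqrt_sq h4).symm
  rw [h5]
  have hw2 : (0:ℝ) ≤ ∑ i ∈ s, (w i)^2 := Finset.sum_nonneg fun i _ => sq_nonneg _
  have hwt : (0:ℝ) ≤ ∑' k, (w k)^2 := tsum_nonneg fun k => sq_nonneg _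
  calc Real.sqrt ((∑ i ∈ s, w i * h i)^2)
      ≤ Real.sqrt ((∑ i ∈ s, (w i)^2) * (∑ i ∈ s, (h i)^2)) := Real.sqrt_le_sqrt h1
    _ ≤ Real.sqrt ((∑' k, (w k)^2) * (∑' k, (h k)^2)) :=
        Real.sqrt_le_sqrt (mul_le_mul h2 h3 (Finset.sum_nonneg fun i _ => sq_nonneg _) hwt)
    _ = Real.sqrt (∑' k, (w k)^2) * Real.sqrt (∑' k, (h k)^2) := Real.sqrt_mul hwt _

lemma weight_summable {r : ℝ} (hr : 1/2 < r) :
    Summable (fun k : ℤ => (1+(k:ℝ)^2)^(-r)) := by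
  have hb : 1 < 2*r := by linarith
  have h1 : Summable (fun k : ℤ => |(k:ℝ)|^(-(2*r))) := summable_abs_int_rpow hb
  have h2 : Summable (fun k : ℤ => if k = 0 then (1:ℝ) else 0) := by
    apply summable_of_ne_finset_zero (s := ({0} : Finset ℤ))
    intro k hk
    simp only [Finset.mem_singleton] at hk
    simp [hk]
  apply Summable.of_nonneg_of_le (fun k => Real.rpow_nonneg (by positivity) _)
    (fun k => ?_) (h1.add h2)
  by_cases hk : k = 0
  · subst hk
    simp only [Int.cast_zero, ne_eq, _root_.abs_zero]
    rw [Real.zero_rpow (by intro h; nlinarith : -(2*r) ≠ 0)]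
    norm_num
  · have hk1 : (1:ℝ) ≤ |(k:ℝ)| := by
      have : (1:ℤ) ≤ |k| := Int.one_le_abs (by exact_mod_cast hk)
      calc (1:ℝ) ≤ (|k| : ℤ) := by exact_mod_cast this
        _ = |(k:ℝ)| := by push_cast; ring
    have hk2 : (0:ℝ) < (k:ℝ)^2 := by rw [← _root_.sq_abs]; nlinarith
    have step1 : (1+(k:ℝ)^2)^(-r) ≤ ((k:ℝ)^2)^(-r) :=
      Real.rpow_le_rpow_of_nonpos hk2 (by linarith) (by linarith)
    have step2 : ((k:ℝ)^2)^(-r) = |(k:ℝ)|^(-(2*r)) := by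
      rw [← _root_.sq_abs, ← Real.rpow_natCast |(k:ℝ)| 2, ← Real.rpow_mul (_root_.abs_nonneg _)]
      norm_num
    simp only [hk, if_false]
    rw [← step2] at *
    linarith [step1]

lemma sym_norm (s : ℝ) (n m : ℤ) :
    ‖symDx m * (symD s n * symDx n - symD s (n - m) * symDx (n - m)
        - symD s m * symDx m - ((s : ℂ) + 1) * symDx (n - m) * symD s m)‖
      = |(m:ℝ)| * |Phi s (((n - m : ℤ)) : ℝ) ((m : ℤ) : ℝ)| := by
  have hxy : (((n - m : ℤ)) : ℝ) + ((m : ℤ) : ℝ) = (n : ℝ) := by push_cast; ring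
  have hE : symD s n * symDx n - symD s (n - m) * symDx (n - m)
      - symD s m * symDx m - ((s : ℂ) + 1) * symDx (n - m) * symD s m
      = Complex.I * ((Phi s (((n - m : ℤ)) : ℝ) ((m : ℤ) : ℝ) : ℝ) : ℂ) := by
    simp only [symD, symDx, Phi, hxy]
    push_cast
    ring
  have hfac : ∀ z E : ℂ, (Complex.I * z) * (Complex.I * E) = -(z * E) := by
    intro z E
    have : Complex.I * z * (Complex.I * E) = Complex.I^2 * (z * E) := by ring
    rw [this, Complex.I_sq]
    ring
  rw [hE]
  show ‖Complex.I * (m : ℂ) * (Complex.I * _)‖ = _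
  rw [hfac]
  rw [norm_neg]
  have : ((m : ℤ) : ℂ) * ((Phi s (((n - m : ℤ)) : ℝ) ((m : ℤ) : ℝ) : ℝ) : ℂ)
      = ((((m : ℤ) : ℝ) * Phi s (((n - m : ℤ)) : ℝ) ((m : ℤ) : ℝ) : ℝ) : ℂ) := by
    push_cast
    ring
  rw [this, Complex.norm_real, Real.norm_eq_abs, _root_.abs_mul]

lemma enn_two_mul_le (x y : ℝ≥0∞) : 2*(x*y) ≤ x^2 + y^2 := by
  rcases le_total x y with h | h
  · obtain ⟨d, rfl⟩ := exists_add_of_le h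
    have e1 : 2*(x*(x+d)) = (2*(x*x) + 2*(x*d)) + 0 := by ring
    have e2 : x^2 + (x+d)^2 = (2*(x*x) + 2*(x*d)) + d*d := by ring
    rw [e1, e2]
    exact add_le_add_right zero_le _
  · obtain ⟨d, rfl⟩ := exists_add_of_le h
    have e1 : 2*((y+d)*y) = (2*(y*y) + 2*(y*d)) + 0 := by ring
    have e2 : (y+d)^2 + y^2 = (2*(y*y) + 2*(y*d)) + d*d := by ring
    rw [e1, e2]
    exact add_le_add_right zero_le _

lemma enn_add_sq (x y : ℝ≥0∞) : (x+y)^2 ≤ 2*(x^2 + y^2) := by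
  have e1 : (x+y)^2 = (x^2 + y^2) + 2*(x*y) := by ring
  have e2 : 2*(x^2+y^2) = (x^2 + y^2) + (x^2 + y^2) := by ring
  rw [e1, e2]
  exact add_le_add_right (enn_two_mul_le x y) _

lemma enn_sq_mono {x y : ℝ≥0∞} (h : x ≤ y) : x^2 ≤ y^2 := by
  rw [sq, sq]; exact mul_le_mul' h h

/-- `‖P_s^{(8)}(u,v)‖_{L²} ≤ C(‖u‖_{H^{s₀}}‖v‖_{H^s} + ‖u‖_{H^s}‖v‖_{H^{s₀}})`
(with `P_s^{(8)}` described through its Fourier coefficients). -/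
theorem statement13 (s₀ s : ℝ) (hs₀ : 7 / 2 < s₀) (hs : 0 ≤ s) :
    ∃ C > (0 : ℝ), ∀ u v P : Torus → ℝ,
      Continuous u → MemHs (max s s₀) u →
      Continuous v → MemHs (max s s₀) v →
      (∀ n : ℤ, FC P n = ∑' m : ℤ,
        symDx m * (symD s n * symDx n - symD s (n - m) * symDx (n - m)
            - symD s m * symDx m - ((s : ℂ) + 1) * symDx (n - m) * symD s m)
          * FC u (n - m) * FC v m) →
      HsNorm 0 P ≤ C * (HsNorm s₀ u * HsNorm s v + HsNorm s u * HsNorm s₀ v) := by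
  -- constants
  set Ks : ℝ := (2:ℝ)^s * (s+2)^2 with hKsdef
  have hKs : 0 < Ks := by
    have h1 : (0:ℝ) < (2:ℝ)^s := Real.rpow_pos_of_pos (by norm_num) s
    have h2 : (0:ℝ) < (s+2)^2 := by positivity
    exact mul_pos h1 h2
  have hΛsum : Summable (fun k : ℤ => (1+(k:ℝ)^2)^(-(s₀-2))) :=
    weight_summable (by linarith)
  set Λ : ℝ := ∑' k : ℤ, (1+(k:ℝ)^2)^(-(s₀-2)) with hΛdef
  have hΛ0 : 0 ≤ Λ := tsum_nonneg fun k => Real.rpow_nonneg (by positivity) _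
  set Cbig : ℝ := 2 * Ks * Real.sqrt Λ with hCbigdef
  have hCbig0 : 0 ≤ Cbig := by positivity
  refine ⟨Cbig + 1, by positivity, ?_⟩
  intro u v P hu hMu hv hMv hP
  -- notation
  set au : ℤ → ℝ := fun k => ‖FC u k‖ with haudef
  set bv : ℤ → ℝ := fun k => ‖FC v k‖ with hbvdef
  have hau0 : ∀ k, 0 ≤ au k := fun k => norm_nonneg _
  have hbv0 : ∀ k, 0 ≤ bv k := fun k => norm_nonneg _
  have hWpos : ∀ k : ℤ, (0:ℝ) < 1 + (k:ℝ)^2 := fun k => by positivity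
  have hW1 : ∀ k : ℤ, (1:ℝ) ≤ 1 + (k:ℝ)^2 := fun k => by nlinarith [sq_nonneg ((k:ℝ))]
  -- summability of weighted squares
  have hcompare : ∀ t : ℝ, t ≤ max s s₀ → ∀ f : Torus → ℝ, MemHs (max s s₀) f →
      Summable (fun k : ℤ => (1+(k:ℝ)^2)^t * ‖FC f k‖^2) := by
    intro t ht f hf
    apply Summable.of_nonneg_of_le
      (fun k => mul_nonneg (Real.rpow_nonneg (hWpos k).le _) (sq_nonneg _)) (fun k => ?_) hf
    exact mul_le_mul_of_nonneg_right
      (Real.rpow_le_rpow_of_exponent_le (hW1 k) ht) (sq_nonneg _)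
  have hus₀ : Summable (fun k : ℤ => (1+(k:ℝ)^2)^s₀ * au k^2) :=
    hcompare s₀ (le_max_right _ _) u hMu
  have hus : Summable (fun k : ℤ => (1+(k:ℝ)^2)^s * au k^2) :=
    hcompare s (le_max_left _ _) u hMu
  have hvs₀ : Summable (fun k : ℤ => (1+(k:ℝ)^2)^s₀ * bv k^2) :=
    hcompare s₀ (le_max_right _ _) v hMv
  have hvs : Summable (fun k : ℤ => (1+(k:ℝ)^2)^s * bv k^2) :=
    hcompare s (le_max_left _ _) v hMv
  -- H^s norms as sqrt of these sums
  set U0 : ℝ := HsNorm s₀ u with hU0def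
  set Us : ℝ := HsNorm s u with hUsdef
  set V0 : ℝ := HsNorm s₀ v with hV0def
  set Vs : ℝ := HsNorm s v with hVsdef
  have hU00 : 0 ≤ U0 := Real.sqrt_nonneg _
  have hUs0 : 0 ≤ Us := Real.sqrt_nonneg _
  have hV00 : 0 ≤ V0 := Real.sqrt_nonneg _
  have hVs0 : 0 ≤ Vs := Real.sqrt_nonneg _
  have hsq : ∀ (t : ℝ) (f : Torus → ℝ),
      (HsNorm t f)^2 = ∑' k : ℤ, (1+(k:ℝ)^2)^t * ‖FC f k‖^2 := by
    intro t f
    rw [HsNorm]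
    exact Real.sq_sqrt (tsum_nonneg fun k =>
      mul_nonneg (Real.rpow_nonneg (hWpos k).le _) (sq_nonneg _))
  -- weighted sequences
  set p1 : ℤ → ℝ := fun k => (1+(k:ℝ)^2) * au k with hp1def
  set q1 : ℤ → ℝ := fun k => (1+(k:ℝ)^2) * bv k with hq1def
  set p2 : ℤ → ℝ := fun k => (1+(k:ℝ)^2)^(s/2) * au k with hp2def
  set q2 : ℤ → ℝ := fun k => (1+(k:ℝ)^2)^(s/2) * bv k with hq2def
  have hp10 : ∀ k, 0 ≤ p1 k := fun k => mul_nonneg (hWpos k).le (hau0 k)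
  have hq10 : ∀ k, 0 ≤ q1 k := fun k => mul_nonneg (hWpos k).le (hbv0 k)
  have hp20 : ∀ k, 0 ≤ p2 k := fun k => mul_nonneg (Real.rpow_nonneg (hWpos k).le _) (hau0 k)
  have hq20 : ∀ k, 0 ≤ q2 k := fun k => mul_nonneg (Real.rpow_nonneg (hWpos k).le _) (hbv0 k)
  -- square identities
  have hp2sq : (fun k : ℤ => (p2 k)^2) = fun k : ℤ => (1+(k:ℝ)^2)^s * au k^2 := by
    funext k
    rw [hp2def]
    have : ((1+(k:ℝ)^2)^(s/2))^2 = (1+(k:ℝ)^2)^s := by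
      rw [sq, ← Real.rpow_add (hWpos k)]
      norm_num
    rw [mul_pow, this]
  have hq2sq : (fun k : ℤ => (q2 k)^2) = fun k : ℤ => (1+(k:ℝ)^2)^s * bv k^2 := by
    funext k
    rw [hq2def]
    have : ((1+(k:ℝ)^2)^(s/2))^2 = (1+(k:ℝ)^2)^s := by
      rw [sq, ← Real.rpow_add (hWpos k)]
      norm_num
    rw [mul_pow, this]
  -- ℓ¹ bound for p1, q1
  have hl1 : ∀ (g : ℤ → ℝ), (∀ k, 0 ≤ g k) →
      Summable (fun k : ℤ => (1+(k:ℝ)^2)^s₀ * g k^2) →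
      Summable (fun k : ℤ => (1+(k:ℝ)^2) * g k) ∧
      ∑' k : ℤ, (1+(k:ℝ)^2) * g k ≤
        Real.sqrt Λ * Real.sqrt (∑' k : ℤ, (1+(k:ℝ)^2)^s₀ * g k^2) := by
    intro g hg hsum
    set w : ℤ → ℝ := fun k => (1+(k:ℝ)^2)^((2-s₀)/2) with hwdef
    set h : ℤ → ℝ := fun k => (1+(k:ℝ)^2)^(s₀/2) * g k with hhdef
    have hw0 : ∀ k, 0 ≤ w k := fun k => Real.rpow_nonneg (hWpos k).le _
    have hh0 : ∀ k, 0 ≤ h k := fun k => mul_nonneg (Real.rpow_nonneg (hWpos k).le _) (hg k)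
    have hwh : (fun k => w k * h k) = fun k : ℤ => (1+(k:ℝ)^2) * g k := by
      funext k
      rw [hwdef, hhdef]
      have : (1+(k:ℝ)^2)^((2-s₀)/2) * (1+(k:ℝ)^2)^(s₀/2) = (1+(k:ℝ)^2) := by
        rw [← Real.rpow_add (hWpos k), show (2-s₀)/2 + s₀/2 = (1:ℝ) by ring, Real.rpow_one]
      calc (1+(k:ℝ)^2)^((2-s₀)/2) * ((1+(k:ℝ)^2)^(s₀/2) * g k)
          = ((1+(k:ℝ)^2)^((2-s₀)/2) * (1+(k:ℝ)^2)^(s₀/2)) * g k := by ring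
        _ = (1+(k:ℝ)^2) * g k := by rw [this]
    have hwsq : (fun k => (w k)^2) = fun k : ℤ => (1+(k:ℝ)^2)^(-(s₀-2)) := by
      funext k
      rw [hwdef, sq, ← Real.rpow_add (hWpos k), show (2-s₀)/2 + (2-s₀)/2 = -(s₀-2) by ring]
    have hhsq : (fun k => (h k)^2) = fun k : ℤ => (1+(k:ℝ)^2)^s₀ * g k^2 := by
      funext k
      rw [hhdef]
      have : ((1+(k:ℝ)^2)^(s₀/2))^2 = (1+(k:ℝ)^2)^s₀ := by
        rw [sq, ← Real.rpow_add (hWpos k)]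
        norm_num
      rw [mul_pow, this]
    have hwsum : Summable (fun k => (w k)^2) := by rw [hwsq]; exact hΛsum
    have hhsum : Summable (fun k => (h k)^2) := by rw [hhsq]; exact hsum
    constructor
    · have := cs_summable hw0 hh0 hwsum hhsum
      rwa [hwh] at this
    · have hcs := cs_real hw0 hh0 hwsum hhsum
      rw [hwh, hwsq, hhsq] at hcs
      exact hcs
  obtain ⟨hp1sum, hp1le⟩ := hl1 au hau0 hus₀
  obtain ⟨hq1sum, hq1le⟩ := hl1 bv hbv0 hvs₀
  rw [← hp1def] at hp1sum hp1le
  rw [← hq1def] at hq1sum hq1le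
  -- ENNReal sequences
  set A1 : ℤ → ℝ≥0∞ := fun k => ENNReal.ofReal (p1 k) with hA1def
  set B1 : ℤ → ℝ≥0∞ := fun k => ENNReal.ofReal (q1 k) with hB1def
  set A2 : ℤ → ℝ≥0∞ := fun k => ENNReal.ofReal (p2 k) with hA2def
  set B2 : ℤ → ℝ≥0∞ := fun k => ENNReal.ofReal (q2 k) with hB2def
  have hU0eq : Real.sqrt (∑' k : ℤ, (1+(k:ℝ)^2)^s₀ * au k^2) = U0 := rfl
  have hV0eq : Real.sqrt (∑' k : ℤ, (1+(k:ℝ)^2)^s₀ * bv k^2) = V0 := rfl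
  have hEA1 : ∑' k, A1 k ≤ ENNReal.ofReal (Real.sqrt Λ * U0) := by
    rw [hA1def, ← ENNReal.ofReal_tsum_of_nonneg hp10 hp1sum]
    apply ENNReal.ofReal_le_ofReal
    rw [← hU0eq]
    exact hp1le
  have hEB1 : ∑' k, B1 k ≤ ENNReal.ofReal (Real.sqrt Λ * V0) := by
    rw [hB1def, ← ENNReal.ofReal_tsum_of_nonneg hq10 hq1sum]
    apply ENNReal.ofReal_le_ofReal
    rw [← hV0eq]
    exact hq1le
  have hp2sum : Summable (fun k => (p2 k)^2) := by rw [hp2sq]; exact hus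
  have hq2sum : Summable (fun k => (q2 k)^2) := by rw [hq2sq]; exact hvs
  have hEA2sq : ∑' k, (A2 k)^2 = ENNReal.ofReal (Us^2) := by
    have e1 : ∑' k, (A2 k)^2 = ∑' k, ENNReal.ofReal ((p2 k)^2) :=
      tsum_congr fun k => (ENNReal.ofReal_pow (hp20 k) 2).symm
    rw [e1, ← ENNReal.ofReal_tsum_of_nonneg (fun k => sq_nonneg _) hp2sum]
    congr 1
    rw [hUsdef, hsq s u, hp2sq]
  have hEB2sq : ∑' k, (B2 k)^2 = ENNReal.ofReal (Vs^2) := by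
    have e1 : ∑' k, (B2 k)^2 = ∑' k, ENNReal.ofReal ((q2 k)^2) :=
      tsum_congr fun k => (ENNReal.ofReal_pow (hq20 k) 2).symm
    rw [e1, ← ENNReal.ofReal_tsum_of_nonneg (fun k => sq_nonneg _) hq2sum]
    congr 1
    rw [hVsdef, hsq s v, hq2sq]
  -- pointwise bound on FC P
  have hFCP : ∀ n : ℤ, ENNReal.ofReal ‖FC P n‖ ≤
      ENNReal.ofReal Ks * ((∑' m, A1 (n-m) * B2 m) + ∑' m, A2 (n-m) * B1 m) := by
    intro n
    set T : ℤ → ℂ := fun m => symDx m * (symD s n * symDx n - symD s (n - m) * symDx (n - m)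
            - symD s m * symDx m - ((s:ℂ) + 1) * symDx (n - m) * symD s m)
          * FC u (n - m) * FC v m with hTdef
    have hTb : ∀ m : ℤ, ‖T m‖ ≤ Ks * (p1 (n-m) * q2 m + p2 (n-m) * q1 m) := by
      intro m
      have hnorm : ‖T m‖ = (|((m:ℤ):ℝ)| * |Phi s (((n-m : ℤ)):ℝ) (((m:ℤ)):ℝ)|) * (au (n-m) * bv m) := by
        rw [hTdef]
        simp only [norm_mul, sym_norm s n m, haudef, hbvdef]
        ring
      rw [hnorm]
      have hk := key s (((n-m:ℤ)):ℝ) (((m:ℤ)):ℝ) hs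
      have hab : (0:ℝ) ≤ au (n-m) * bv m := mul_nonneg (hau0 _) (hbv0 _)
      calc (|((m:ℤ):ℝ)| * |Phi s (((n-m : ℤ)):ℝ) (((m:ℤ)):ℝ)|) * (au (n-m) * bv m)
          ≤ ((2:ℝ)^s * (s+2)^2 * ((1 + (((n-m:ℤ)):ℝ)^2) * (1 + (((m:ℤ)):ℝ)^2)^(s/2)
              + (1 + (((n-m:ℤ)):ℝ)^2)^(s/2) * (1 + (((m:ℤ)):ℝ)^2))) * (au (n-m) * bv m) :=
            mul_le_mul_of_nonneg_right hk hab
        _ = Ks * (p1 (n-m) * q2 m + p2 (n-m) * q1 m) := by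
            rw [hKsdef, hp1def, hq2def, hp2def, hq1def]
            ring
    by_cases hsumT : Summable T
    · have hnsum : Summable (fun m => ‖T m‖) := summable_norm_iff.mpr hsumT
      have h1 : ‖FC P n‖ ≤ ∑' m, ‖T m‖ := by
        rw [hP n]
        exact norm_tsum_le_tsum_norm hnsum
      calc ENNReal.ofReal ‖FC P n‖ ≤ ENNReal.ofReal (∑' m, ‖T m‖) :=
            ENNReal.ofReal_le_ofReal h1
        _ = ∑' m, ENNReal.ofReal ‖T m‖ :=
            ENNReal.ofReal_tsum_of_nonneg (fun m => norm_nonneg _) hnsum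
        _ ≤ ∑' m, ENNReal.ofReal (Ks * (p1 (n-m) * q2 m + p2 (n-m) * q1 m)) :=
            ENNReal.tsum_le_tsum (fun m => ENNReal.ofReal_le_ofReal (hTb m))
        _ = ∑' m, ENNReal.ofReal Ks * (A1 (n-m) * B2 m + A2 (n-m) * B1 m) := by
            refine tsum_congr fun m => ?_
            rw [ENNReal.ofReal_mul hKs.le,
              ENNReal.ofReal_add (mul_nonneg (hp10 _) (hq20 _)) (mul_nonneg (hp20 _) (hq10 _)),
              ENNReal.ofReal_mul (hp10 _), ENNReal.ofReal_mul (hp20 _)]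
        _ = ENNReal.ofReal Ks * ((∑' m, A1 (n-m) * B2 m) + ∑' m, A2 (n-m) * B1 m) := by
            rw [ENNReal.tsum_mul_left, ENNReal.tsum_add]
    · rw [hP n, tsum_eq_zero_of_not_summable hsumT]
      simp only [norm_zero, ENNReal.ofReal_zero]
      exact zero_le
  -- sum the squares
  have hy1 : ∑' n : ℤ, (∑' m, A1 (n-m) * B2 m)^2 ≤ 2*((∑' k, A1 k)^2 * ∑' m, (B2 m)^2) :=
    young A1 B2
  have hy2 : ∑' n : ℤ, (∑' m, A2 (n-m) * B1 m)^2 ≤ 2*((∑' k, B1 k)^2 * ∑' m, (A2 m)^2) := by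
    have he : ∀ n : ℤ, ∑' m, A2 (n-m) * B1 m = ∑' m, B1 (n-m) * A2 m :=
      fun n => conv_comm A2 B1 n
    calc ∑' n : ℤ, (∑' m, A2 (n-m) * B1 m)^2
        = ∑' n : ℤ, (∑' m, B1 (n-m) * A2 m)^2 := tsum_congr fun n => by rw [he n]
      _ ≤ 2*((∑' k, B1 k)^2 * ∑' m, (A2 m)^2) := young B1 A2
  have hSig : ∑' n : ℤ, (ENNReal.ofReal ‖FC P n‖)^2 ≤
      ENNReal.ofReal Ks^2 * (2 * (2*((∑' k, A1 k)^2 * ∑' m, (B2 m)^2)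
        + 2*((∑' k, B1 k)^2 * ∑' m, (A2 m)^2))) := by
    calc ∑' n : ℤ, (ENNReal.ofReal ‖FC P n‖)^2
        ≤ ∑' n : ℤ, (ENNReal.ofReal Ks * ((∑' m, A1 (n-m) * B2 m) + ∑' m, A2 (n-m) * B1 m))^2 :=
          ENNReal.tsum_le_tsum fun n => enn_sq_mono (hFCP n)
      _ = ENNReal.ofReal Ks^2 * ∑' n : ℤ, ((∑' m, A1 (n-m) * B2 m) + ∑' m, A2 (n-m) * B1 m)^2 := by
          rw [← ENNReal.tsum_mul_left]
          exact tsum_congr fun n => by ring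
      _ ≤ ENNReal.ofReal Ks^2 * ∑' n : ℤ, (2*(((∑' m, A1 (n-m) * B2 m))^2 + ((∑' m, A2 (n-m) * B1 m))^2)) :=
          mul_le_mul_right (ENNReal.tsum_le_tsum fun n => enn_add_sq _ _) _
      _ = ENNReal.ofReal Ks^2 * (2 * ((∑' n : ℤ, ((∑' m, A1 (n-m) * B2 m))^2)
            + ∑' n : ℤ, ((∑' m, A2 (n-m) * B1 m))^2)) := by
          rw [ENNReal.tsum_mul_left, ENNReal.tsum_add]
      _ ≤ ENNReal.ofReal Ks^2 * (2 * (2*((∑' k, A1 k)^2 * ∑' m, (B2 m)^2)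
            + 2*((∑' k, B1 k)^2 * ∑' m, (A2 m)^2))) :=
          mul_le_mul_right (mul_le_mul_right (add_le_add hy1 hy2) _) _
  -- real bound
  set R : ℝ := Cbig * (U0 * Vs + Us * V0) with hRdef
  have hsum0 : 0 ≤ U0 * Vs + Us * V0 :=
    add_nonneg (mul_nonneg hU00 hVs0) (mul_nonneg hUs0 hV00)
  have hR0 : 0 ≤ R := mul_nonneg hCbig0 hsum0
  have hbound : ∑' n : ℤ, (ENNReal.ofReal ‖FC P n‖)^2 ≤ ENNReal.ofReal (R^2) := by
    refine hSig.trans ?_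
    have e1 : (∑' k, A1 k)^2 * (∑' m, (B2 m)^2) ≤ ENNReal.ofReal ((Real.sqrt Λ * U0)^2 * Vs^2) := by
      rw [hEB2sq]
      calc (∑' k, A1 k)^2 * ENNReal.ofReal (Vs^2)
          ≤ (ENNReal.ofReal (Real.sqrt Λ * U0))^2 * ENNReal.ofReal (Vs^2) :=
            mul_le_mul_left (enn_sq_mono hEA1) _
        _ = ENNReal.ofReal ((Real.sqrt Λ * U0)^2 * Vs^2) := by
            rw [← ENNReal.ofReal_pow (by positivity), ← ENNReal.ofReal_mul (by positivity)]
    have e2 : (∑' k, B1 k)^2 * (∑' m, (A2 m)^2) ≤ ENNReal.ofReal ((Real.sqrt Λ * V0)^2 * Us^2) := by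
      rw [hEA2sq]
      calc (∑' k, B1 k)^2 * ENNReal.ofReal (Us^2)
          ≤ (ENNReal.ofReal (Real.sqrt Λ * V0))^2 * ENNReal.ofReal (Us^2) :=
            mul_le_mul_left (enn_sq_mono hEB1) _
        _ = ENNReal.ofReal ((Real.sqrt Λ * V0)^2 * Us^2) := by
            rw [← ENNReal.ofReal_pow (by positivity), ← ENNReal.ofReal_mul (by positivity)]
    calc ENNReal.ofReal Ks^2 * (2 * (2*((∑' k, A1 k)^2 * ∑' m, (B2 m)^2)
          + 2*((∑' k, B1 k)^2 * ∑' m, (A2 m)^2)))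
        ≤ ENNReal.ofReal Ks^2 * (2 * (2*ENNReal.ofReal ((Real.sqrt Λ * U0)^2 * Vs^2)
          + 2*ENNReal.ofReal ((Real.sqrt Λ * V0)^2 * Us^2))) := by
          exact mul_le_mul_right (mul_le_mul_right
            (add_le_add (mul_le_mul_right e1 _) (mul_le_mul_right e2 _)) _) _
      _ = ENNReal.ofReal (Ks^2 * (2 * (2*((Real.sqrt Λ * U0)^2 * Vs^2)
          + 2*((Real.sqrt Λ * V0)^2 * Us^2)))) := by
          rw [← ENNReal.ofReal_pow hKs.le]
          rw [← ENNReal.ofReal_ofNat 2]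
          rw [← ENNReal.ofReal_mul (by positivity), ← ENNReal.ofReal_mul (by positivity),
            ← ENNReal.ofReal_add (by positivity) (by positivity),
            ← ENNReal.ofReal_mul (by norm_num), ← ENNReal.ofReal_mul (by positivity)]
      _ ≤ ENNReal.ofReal (R^2) := by
          apply ENNReal.ofReal_le_ofReal
          rw [hRdef, hCbigdef]
          have eL : Ks^2 * (2 * (2*((Real.sqrt Λ * U0)^2 * Vs^2)
              + 2*((Real.sqrt Λ * V0)^2 * Us^2)))
              = 4*Ks^2*(Real.sqrt Λ^2)*((U0*Vs)^2 + (Us*V0)^2) := by ring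
          have eR : (2 * Ks * Real.sqrt Λ * (U0 * Vs + Us * V0))^2
              = 4*Ks^2*(Real.sqrt Λ^2)*((U0*Vs)^2 + (Us*V0)^2)
                + 8*(Ks^2*(Real.sqrt Λ^2))*((U0*Vs)*(Us*V0)) := by ring
          have hnn : 0 ≤ 8*(Ks^2*(Real.sqrt Λ^2))*((U0*Vs)*(Us*V0)) := by
            apply mul_nonneg
            · positivity
            · exact mul_nonneg (mul_nonneg hU00 hVs0) (mul_nonneg hUs0 hV00)
          rw [eL, eR]
          linarith
  -- conclude
  have hnorm0 : HsNorm 0 P = Real.sqrt (∑' n : ℤ, ‖FC P n‖^2) := by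
    rw [HsNorm]
    congr 1
    exact tsum_congr fun n => by rw [Real.rpow_zero, one_mul]
  by_cases hPsum : Summable (fun n : ℤ => ‖FC P n‖^2)
  · have heq : ENNReal.ofReal (∑' n : ℤ, ‖FC P n‖^2) = ∑' n : ℤ, (ENNReal.ofReal ‖FC P n‖)^2 := by
      rw [ENNReal.ofReal_tsum_of_nonneg (fun n => sq_nonneg _) hPsum]
      exact tsum_congr fun n => ENNReal.ofReal_pow (norm_nonneg _) 2
    have hle : ∑' n : ℤ, ‖FC P n‖^2 ≤ R^2 := by
      have h2 : ENNReal.ofReal (∑' n : ℤ, ‖FC P n‖^2) ≤ ENNReal.ofReal (R^2) := by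
        rw [heq]; exact hbound
      exact (ENNReal.ofReal_le_ofReal_iff (by positivity)).mp h2
    rw [hnorm0]
    calc Real.sqrt (∑' n : ℤ, ‖FC P n‖^2) ≤ Real.sqrt (R^2) := Real.sqrt_le_sqrt hle
      _ = R := Real.sqrt_sq hR0
      _ ≤ (Cbig+1) * (U0 * Vs + Us * V0) := by
          rw [hRdef]
          exact mul_le_mul_of_nonneg_right (by linarith) hsum0
  · rw [hnorm0, tsum_eq_zero_of_not_summable hPsum, Real.sqrt_zero]
    have : 0 ≤ (Cbig+1) * (U0 * Vs + Us * V0) := mul_nonneg (by linarith) hsum0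
    linarith
end
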